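/- Let f : ℝ² → ℝ be of class C⁴ near the origin with f_{20} = f_{02} = f_{30} = f_{03} = 0 at the origin. Define a : ℝ³ → ℝ by a(x, y, p) = f_{20}(x, y) + 2 f_{11}(x, y) p + f_{02}(x, y) p² and I : ℝ³ → ℝ by I(x, y, p) = (∂a/∂x)(x, y, p) + p (∂a/∂y)(x, y, p). Then the Fréchet derivative at (0, 0, 0) of the map G = (a, I) : ℝ³ → ℝ² is the linear map (ξ, η, π) ↦ ( f_{21} η + 2 f_{11} π , f_{40} ξ + f_{31} η + 3 f_{21} π ), where f_{ij} denotes the value at the origin. -/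

import Mathlib

/-- Partial derivative in the `x` direction. -/
noncomputable def pdx (f : ℝ × ℝ → ℝ) : ℝ × ℝ → ℝ := fun q => fderiv ℝ f q (1, 0)

/-- Partial derivative in the `y` direction. -/
noncomputable def pdy (f : ℝ × ℝ → ℝ) : ℝ × ℝ → ℝ := fun q => fderiv ℝ f q (0, 1)

/-- `pd i j f = ∂^{i+j} f / ∂x^i ∂y^j`. -/
noncomputable def pd (i j : ℕ) (f : ℝ × ℝ → ℝ) : ℝ × ℝ → ℝ := pdx^[i] (pdy^[j] f)

/-! Adding the slope `p` as a third coordinate, `a` is a polynomial in `p` whose coefficients are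
second partial derivatives of `f`, and so is `I = ∂ₓa + p ∂ᵧa`, with third partial derivatives as
coefficients. At `p = 0` the differential of `∑ₖ uₖ(x, y) pᵏ` is `du₀ + u₁ dp`, so `dG(0)` only
involves `u₀` and `u₁` of `a` and of `I`. Equality of mixed partials (`f` is `C⁴`) turns these
into `f₂₁`, `f₃₁`, `f₄₀`, and `f₃₀ = 0` removes the `ξ`-term of the first component. -/

open Filter Topology

section PartialDerivatives

variable {g h : ℝ × ℝ → ℝ} {q : ℝ × ℝ}

lemma fderiv_apply_eq_add_pdx_pdy (ξ η : ℝ) :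
    fderiv ℝ g q (ξ, η) = ξ * pdx g q + η * pdy g q := by
  have hv : ((ξ, η) : ℝ × ℝ) = ξ • ((1 : ℝ), (0 : ℝ)) + η • ((0 : ℝ), (1 : ℝ)) := by
    simp
  rw [hv, map_add, map_smul, map_smul, smul_eq_mul, smul_eq_mul, pdx, pdy]

lemma pdx_pd (i j : ℕ) (f : ℝ × ℝ → ℝ) : pdx (pd i j f) = pd (i + 1) j f :=
  (Function.iterate_succ_apply' pdx i _).symm

lemma pdx_const_smul (c : ℝ) (g : ℝ × ℝ → ℝ) : pdx (c • g) = c • pdx g := by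
  ext q
  simp [pdx, fderiv_const_smul_field]

lemma ContDiffAt.pdx {n : WithTop ℕ∞} (hg : ContDiffAt ℝ (n + 1) g q) :
    ContDiffAt ℝ n (pdx g) q :=
  (hg.fderiv_right le_rfl).clm_apply contDiffAt_const

lemma ContDiffAt.pdy {n : WithTop ℕ∞} (hg : ContDiffAt ℝ (n + 1) g q) :
    ContDiffAt ℝ n (pdy g) q :=
  (hg.fderiv_right le_rfl).clm_apply contDiffAt_const

lemma ContDiffAt.pd {n : WithTop ℕ∞} {i j : ℕ} (hg : ContDiffAt ℝ (n + (i + j : ℕ)) g q) :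
    ContDiffAt ℝ n (_root_.pd i j g) q := by
  induction i generalizing n with
  | zero =>
    induction j generalizing n with
    | zero => simpa [_root_.pd] using hg
    | succ j ih =>
      rw [_root_.pd, Function.iterate_zero_apply, Function.iterate_succ_apply']
      have hn : n + ((0 + (j + 1) : ℕ) : WithTop ℕ∞) = n + 1 + ((0 + j : ℕ) : WithTop ℕ∞) := by
        push_cast; abel
      exact (ih (hn ▸ hg)).pdy
  | succ i ih =>
    have hn : n + ((i + 1 + j : ℕ) : WithTop ℕ∞) = n + 1 + ((i + j : ℕ) : WithTop ℕ∞) := by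
      push_cast; abel
    rw [← pdx_pd]
    exact (ih (hn ▸ hg)).pdx

lemma pdx_pdy_eq_pdy_pdx (hg : ContDiffAt ℝ 2 g q) : pdx (pdy g) q = pdy (pdx g) q := by
  have hdiff : DifferentiableAt ℝ (fderiv ℝ g) q :=
    (hg.fderiv_right (m := 1) (by norm_num)).differentiableAt one_ne_zero
  have hsymm := hg.isSymmSndFDerivAt (by simp [minSmoothness_of_isRCLikeNormedField])
  change fderiv ℝ (fun y => fderiv ℝ g y (0, 1)) q (1, 0)
    = fderiv ℝ (fun y => fderiv ℝ g y (1, 0)) q (0, 1)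
  rw [fderiv_clm_apply hdiff (differentiableAt_const _),
    fderiv_clm_apply hdiff (differentiableAt_const _)]
  simpa using hsymm (1, 0) (0, 1)

lemma pdx_pdy_eventuallyEq (hg : ContDiffAt ℝ 2 g q) : pdx (pdy g) =ᶠ[𝓝 q] pdy (pdx g) :=
  (hg.eventually (by simp)).mono fun _ => pdx_pdy_eq_pdy_pdx

lemma Filter.EventuallyEq.pdx (hgh : g =ᶠ[𝓝 q] h) : pdx g =ᶠ[𝓝 q] pdx h :=
  (hgh.fderiv (𝕜 := ℝ)).mono fun q hq => by simp only [_root_.pdx, hq]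

lemma pdy_pd_eventuallyEq {f : ℝ × ℝ → ℝ} {i j : ℕ} (hf : ContDiffAt ℝ (i + j + 1 : ℕ) f q) :
    pdy (pd i j f) =ᶠ[𝓝 q] pd i (j + 1) f := by
  induction i with
  | zero => exact .of_eq (Function.iterate_succ_apply' pdy j f).symm
  | succ i ih =>
    have hpd : ContDiffAt ℝ 2 (pd i j f) q :=
      ContDiffAt.pd (by convert hf using 2; push_cast; ring)
    rw [← pdx_pd, ← pdx_pd]
    exact (pdx_pdy_eventuallyEq hpd).symm.trans (ih (hf.of_le (by norm_cast; omega))).pdx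

end PartialDerivatives

section SlopePolynomials

def projXY : ℝ × ℝ × ℝ →L[ℝ] ℝ × ℝ :=
  (ContinuousLinearMap.fst ℝ ℝ (ℝ × ℝ)).prod
    ((ContinuousLinearMap.fst ℝ ℝ ℝ).comp (ContinuousLinearMap.snd ℝ ℝ (ℝ × ℝ)))

def projP : ℝ × ℝ × ℝ →L[ℝ] ℝ :=
  (ContinuousLinearMap.snd ℝ ℝ ℝ).comp (ContinuousLinearMap.snd ℝ ℝ (ℝ × ℝ))

@[simp] lemma projXY_apply (z : ℝ × ℝ × ℝ) : projXY z = (z.1, z.2.1) := rfl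

@[simp] lemma projP_apply (z : ℝ × ℝ × ℝ) : projP z = z.2.2 := rfl

def slopePoly {n : ℕ} (u : Fin n → ℝ × ℝ → ℝ) (z : ℝ × ℝ × ℝ) : ℝ :=
  ∑ k, u k (z.1, z.2.1) * z.2.2 ^ (k : ℕ)

variable {n : ℕ}

lemma hasFDerivAt_slopePoly {u : Fin n → ℝ × ℝ → ℝ} {z : ℝ × ℝ × ℝ}
    (hu : ∀ k, DifferentiableAt ℝ (u k) (z.1, z.2.1)) :
    HasFDerivAt (slopePoly u)
      (∑ k, (u k (z.1, z.2.1) • (((k : ℕ) • z.2.2 ^ ((k : ℕ) - 1)) • projP)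
        + z.2.2 ^ (k : ℕ) • (fderiv ℝ (u k) (z.1, z.2.1)).comp projXY)) z :=
  HasFDerivAt.fun_sum fun k _ =>
    ((hu k).hasFDerivAt.comp z projXY.hasFDerivAt).mul (projP.hasFDerivAt.pow k)

lemma fderiv_slopePoly_apply_horizontal {u : Fin n → ℝ × ℝ → ℝ} {z : ℝ × ℝ × ℝ}
    (hu : ∀ k, DifferentiableAt ℝ (u k) (z.1, z.2.1)) (ξ η : ℝ) :
    fderiv ℝ (slopePoly u) z (ξ, η, 0) = slopePoly (fun k q => fderiv ℝ (u k) q (ξ, η)) z := by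
  simp [(hasFDerivAt_slopePoly hu).fderiv, slopePoly, mul_comm]

lemma slopePoly_slope_zero (u : Fin (n + 1) → ℝ × ℝ → ℝ) (x y : ℝ) :
    slopePoly u (x, y, 0) = u 0 (x, y) := by
  simp [slopePoly, Fin.sum_univ_succ]

lemma hasFDerivAt_slopePoly_slope_zero {u : Fin (n + 2) → ℝ × ℝ → ℝ} {x y : ℝ}
    (hu : ∀ k, DifferentiableAt ℝ (u k) (x, y)) :
    HasFDerivAt (slopePoly u) ((fderiv ℝ (u 0) (x, y)).comp projXY + u 1 (x, y) • projP)
      (x, y, 0) := by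
  refine (hasFDerivAt_slopePoly hu).congr_fderiv ?_
  ext <;> simp [Fin.sum_univ_succ]

lemma hasFDerivAt_slope_mul_slopePoly_slope_zero {w : Fin (n + 1) → ℝ × ℝ → ℝ} {x y : ℝ}
    (hw : ∀ k, DifferentiableAt ℝ (w k) (x, y)) :
    HasFDerivAt (fun z => z.2.2 * slopePoly w z) (w 0 (x, y) • projP) (x, y, 0) :=
  (projP.hasFDerivAt.mul (hasFDerivAt_slopePoly hw)).congr_fderiv (by simp [slopePoly_slope_zero])

end SlopePolynomials

theorem fderiv_of_G_at_hyperbonode_general (f : ℝ × ℝ → ℝ) (hf : ContDiffAt ℝ 4 f 0)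
    (h30 : pd 3 0 f 0 = 0)
    (a : ℝ × ℝ × ℝ → ℝ)
    (ha : ∀ x y p : ℝ,
      a (x, y, p) = pd 2 0 f (x, y) + 2 * pd 1 1 f (x, y) * p + pd 0 2 f (x, y) * p ^ 2)
    (I : ℝ × ℝ × ℝ → ℝ)
    (hI : ∀ x y p : ℝ,
      I (x, y, p) = fderiv ℝ a (x, y, p) (1, 0, 0) + p * fderiv ℝ a (x, y, p) (0, 1, 0))
    (G : ℝ × ℝ × ℝ → ℝ × ℝ) (hG : ∀ w, G w = (a w, I w)) :
    ∀ ξ η π' : ℝ,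
      fderiv ℝ G (0, 0, 0) (ξ, η, π') =
        (pd 2 1 f 0 * η + 2 * pd 1 1 f 0 * π',
         pd 4 0 f 0 * ξ + pd 3 1 f 0 * η + 3 * pd 2 1 f 0 * π') := by
  intro ξ η π'
  set u : Fin 3 → ℝ × ℝ → ℝ := ![pd 2 0 f, (2 : ℝ) • pd 1 1 f, pd 0 2 f]
  have ha_eq : a = slopePoly u := funext fun ⟨x, y, p⟩ => by
    simp [slopePoly, ha, Fin.sum_univ_three, u]
  have hu : ∀ᶠ q in 𝓝 (0 : ℝ × ℝ), ∀ k, ContDiffAt ℝ 2 (u k) q := by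
    filter_upwards [hf.eventually (by simp)] with q hq
    have hpd (i j : ℕ) (hij : i + j = 2) : ContDiffAt ℝ 2 (pd i j f) q := .pd (by rwa [hij])
    intro k
    fin_cases k
    exacts [hpd 2 0 rfl, (hpd 1 1 rfl).const_smul (2 : ℝ), hpd 0 2 rfl]
  have hI_eq : I =ᶠ[𝓝 (0, 0, 0)] fun z =>
      slopePoly (fun k => pdx (u k)) z + z.2.2 * slopePoly (fun k => pdy (u k)) z := by
    filter_upwards [(projXY.continuous.tendsto 0).eventually hu] with ⟨x, y, p⟩ hz
    have hdiff (k : Fin 3) : DifferentiableAt ℝ (u k) (x, y) := (hz k).differentiableAt two_ne_zero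
    rw [hI, ha_eq, fderiv_slopePoly_apply_horizontal hdiff, fderiv_slopePoly_apply_horizontal hdiff]
    rfl
  have hu0 (k : Fin 3) : ContDiffAt ℝ 2 (u k) (0, 0) := hu.self_of_nhds k
  have ha' := ha_eq ▸ hasFDerivAt_slopePoly_slope_zero fun k => (hu0 k).differentiableAt two_ne_zero
  have hI' := ((hasFDerivAt_slopePoly_slope_zero (u := fun k => pdx (u k))
      fun k => ((hu0 k).pdx (n := 1)).differentiableAt one_ne_zero).add
    (hasFDerivAt_slope_mul_slopePoly_slope_zero (w := fun k => pdy (u k))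
      fun k => ((hu0 k).pdy (n := 1)).differentiableAt one_ne_zero)).congr_of_eventuallyEq hI_eq
  have h21 : pdy (pd 2 0 f) 0 = pd 2 1 f 0 :=
    (pdy_pd_eventuallyEq (hf.of_le (by norm_num))).self_of_nhds
  have h31 : pdy (pd 3 0 f) 0 = pd 3 1 f 0 := (pdy_pd_eventuallyEq hf).self_of_nhds
  rw [show G = fun w => (a w, I w) from funext hG, (ha'.prodMk hI').fderiv]
  simp [u, fderiv_apply_eq_add_pdx_pdy, pdx_pd, pdx_const_smul, Prod.mk_zero_zero, h21, h31, h30]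
  constructor <;> ring

/-- The differential computation in the proof of the Lemma of Section 6 of the paper:
the Fréchet derivative at the origin of `G = (a, I)` is the linear map
`(ξ, η, π) ↦ (f₂₁ η + 2 f₁₁ π, f₄₀ ξ + f₃₁ η + 3 f₂₁ π)`. -/
theorem fderiv_of_G_at_hyperbonode (f : ℝ × ℝ → ℝ) (hf : ContDiffAt ℝ 4 f 0)
    (h20 : pd 2 0 f 0 = 0) (h02 : pd 0 2 f 0 = 0)
    (h30 : pd 3 0 f 0 = 0) (h03 : pd 0 3 f 0 = 0)
    (a : ℝ × ℝ × ℝ → ℝ)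
    (ha : ∀ x y p : ℝ,
      a (x, y, p) = pd 2 0 f (x, y) + 2 * pd 1 1 f (x, y) * p + pd 0 2 f (x, y) * p ^ 2)
    (I : ℝ × ℝ × ℝ → ℝ)
    (hI : ∀ x y p : ℝ,
      I (x, y, p) = fderiv ℝ a (x, y, p) (1, 0, 0) + p * fderiv ℝ a (x, y, p) (0, 1, 0))
    (G : ℝ × ℝ × ℝ → ℝ × ℝ) (hG : ∀ w, G w = (a w, I w)) :
    ∀ ξ η π' : ℝ,
      fderiv ℝ G (0, 0, 0) (ξ, η, π') =
        (pd 2 1 f 0 * η + 2 * pd 1 1 f 0 * π',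
         pd 4 0 f 0 * ξ + pd 3 1 f 0 * η + 3 * pd 2 1 f 0 * π') :=
  fderiv_of_G_at_hyperbonode_general f hf h30 a ha I hI G hG
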